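/- Let X be a nonempty set, let φ₁ : X → X and, for every integer k ≥ 2, let φ_k : X² → X and u_k ∈ {ℓ, r} be given; set δ_{φ_1} = φ₁ and δ_{φ_k}(u) = φ_k(u,u) for k ≥ 2. Then there exists a B-associative ε-standard operation F : X* → X ∪ {ε} with F₁ = φ₁ and δ^{u_k}_{F_k} = φ_k for every k ≥ 2 if and only if the following two conditions hold: (a) for every k ≥ 1 and all u, v ∈ X, φ_{k+1}(u,v) = φ_{k+1}(δ_{φ_k}(u), v) if u_{k+1} = r, and φ_{k+1}(u,v) = φ_{k+1}(u, δ_{φ_k}(v)) if u_{k+1} = ℓ; (b) there exists an arity-wise range-idempotent ε-standard operation G : X* → X ∪ {ε} with G₁ = φ₁ such that for every k ≥ 1, all letters x, z ∈ X and every string y ∈ X^{k-1}: G_{k+1}(xyz) = φ_{k+1}(G_k(xy), z) if u_{k+1} = r and G_{k+1}(xyz) = φ_{k+1}(x, G_k(yz)) if u_{k+1} = ℓ, and moreover G_{k+1}(xyz) = δ^ℓ_{G_{k+1}}(x, G_k(yz)) if u_{k+1} = r and G_{k+1}(xyz) = δ^r_{G_{k+1}}(G_k(xy), z) if u_{k+1}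 = ℓ. If these conditions hold, then F = G is such an operation. -/

import Mathlib

/-!
For an ε-standard operation, B-associativity is arity-wise range-idempotence together with
B-preassociativity: `G y = G y'` and `|y| = |y'|` imply `G (x y z) = G (x y' z)`. The recursion
in (b) computes `G (a y)` and `G (y c)` from the letter, `|y|` and `G y` alone, so one-letter
extensions preserve this equivalence, and iterating them gives B-preassociativity. Condition (a)
turns the recursion on constant strings into `G (u^k) = δ_{φ_k} u`, from which the prescribed
sections follow. Conversely, (a) and (b) are instances of B-associativity applied to the blocks
`u^k`, `x y` and `y z`.
-/

/-- `RepStr F y` is the string `F(y)^{|y|}`: `|y|` copies of `F y` if `F y ∈ X`,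
and the empty string if `F y = ε` (here `ε` is encoded by `none`). -/
def RepStr {X : Type*} (F : List X → Option X) (y : List X) : List X :=
  match F y with
  | some a => List.replicate y.length a
  | none => []

/-- `F` is barycentrically associative. -/
def BAssoc {X : Type*} (F : List X → Option X) : Prop :=
  ∀ x y z : List X, F (x ++ y ++ z) = F (x ++ RepStr F y ++ z)

/-- `F` is ε-standard: `F x = ε` iff `x = ε`. -/
def EpsStd {X : Type*} (F : List X → Option X) : Prop :=
  ∀ x : List X, F x = none ↔ x = []

/-- `F` is barycentrically preassociative. -/
def BPreassoc {X Y : Type*} (F : List X → Y) : Prop :=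
  ∀ x y y' z : List X, y.length = y'.length → F y = F y' →
    F (x ++ y ++ z) = F (x ++ y' ++ z)

/-- `F` is arity-wise range-idempotent: `F (F(x)^{|x|}) = F x`. -/
def AWRI {X : Type*} (F : List X → Option X) : Prop :=
  ∀ x : List X, F (RepStr F x) = F x

/-- `F` is arity-wise quasi-range-idempotent: `ran δ_{F_n} = ran F_n` for all `n ≥ 1`. -/
def AWQRI {X Y : Type*} (F : List X → Y) : Prop :=
  ∀ n : ℕ, 1 ≤ n →
    Set.range (fun u : X => F (List.replicate n u)) = F '' {l : List X | l.length = n}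

/-- `g` is a quasi-inverse of `f`: `f (g b) = b` for every `b ∈ ran f`, and
`g (ran f) = ran g`. -/
def QuasiInv {α β : Type*} (f : α → β) (g : β → α) : Prop :=
  (∀ b ∈ Set.range f, f (g b) = b) ∧ g '' Set.range f = Set.range g

/-- `dphi phi1 phi k` is the diagonal section `δ_{φ_k}`: `φ₁` for `k = 1` and
`u ↦ φ_k(u,u)` for `k ≥ 2`.  (The value at `k = 0` is irrelevant.) -/
def dphi {X : Type*} (phi1 : X → X) (phi : ℕ → X → X → X) : ℕ → X → X
  | 0 => id
  | 1 => phi1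
  | (k + 2) => fun u => phi (k + 2) u u


section Operations

variable {X : Type*} {F : List X → Option X} {s : List X} {b : X}

theorem EpsStd.exists_eq_some (hE : EpsStd F) (hs : s ≠ []) : ∃ a, F s = some a :=
  Option.ne_none_iff_exists'.mp fun h => hs ((hE s).mp h)

theorem repStr_of_eq_some (h : F s = some b) : RepStr F s = List.replicate s.length b := by
  simp [RepStr, h]

theorem BAssoc.awri (hB : BAssoc F) : AWRI F := fun x => by
  simpa using (hB [] x []).symm

theorem BAssoc.cons_eq (hB : BAssoc F) (h : F s = some b) (a : X) :
    F (a :: s) = F (a :: List.replicate s.length b) := by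
  simpa [repStr_of_eq_some h] using hB [a] s []

theorem BAssoc.append_singleton_eq (hB : BAssoc F) (h : F s = some b) (c : X) :
    F (s ++ [c]) = F (List.replicate s.length b ++ [c]) := by
  simpa [repStr_of_eq_some h] using hB [] s [c]

theorem bPreassoc_of_cons_of_append_singleton {Y : Type*} {H : List X → Y}
    (hcons : ∀ (a : X) (s t : List X), s.length = t.length → H s = H t →
      H (a :: s) = H (a :: t))
    (hsnoc : ∀ (s t : List X) (c : X), s.length = t.length → H s = H t →
      H (s ++ [c]) = H (t ++ [c])) :
    BPreassoc H := by
  intro x y y' z hlen hy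
  induction z using List.reverseRecOn with
  | nil =>
    induction x with
    | nil => simpa using hy
    | cons a x ih => simpa using hcons a _ _ (by simp [hlen]) ih
  | append_singleton z c ih =>
    simpa [List.append_assoc] using hsnoc _ _ c (by simp [hlen]) ih

theorem bAssoc_of_bPreassoc (hE : EpsStd F) (hP : BPreassoc F) (hR : AWRI F) : BAssoc F := by
  intro x y z
  rcases eq_or_ne y [] with rfl | hy
  · cases h : F [] <;> simp [RepStr, h]
  obtain ⟨b, hb⟩ := hE.exists_eq_some hy
  have hrep := hR y
  rw [repStr_of_eq_some hb] at hrep ⊢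
  exact hP x y _ z (by simp) hrep.symm

end Operations

/-- Condition (a). -/
def DiagAbsorbing {X : Type*} (phi1 : X → X) (phi : ℕ → X → X → X) (side : ℕ → Bool) :
    Prop :=
  ∀ k : ℕ, 1 ≤ k → ∀ u v : X,
    (side (k + 1) = true → phi (k + 1) u v = phi (k + 1) (dphi phi1 phi k u) v) ∧
    (side (k + 1) = false → phi (k + 1) u v = phi (k + 1) u (dphi phi1 phi k v))

/-- The recursion of condition (b). -/
def RecursiveAlong {X : Type*} (phi : ℕ → X → X → X) (side : ℕ → Bool)
    (G : List X → Option X) : Prop :=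
  ∀ k : ℕ, 1 ≤ k → ∀ (x z : X) (y : List X), y.length + 1 = k →
    (side (k + 1) = true →
      (∀ a : X, G (x :: y) = some a →
        G (x :: (y ++ [z])) = some (phi (k + 1) a z)) ∧
      (∀ b : X, G (y ++ [z]) = some b →
        G (x :: (y ++ [z])) = G (x :: List.replicate k b))) ∧
    (side (k + 1) = false →
      (∀ b : X, G (y ++ [z]) = some b →
        G (x :: (y ++ [z])) = some (phi (k + 1) x b)) ∧
      (∀ a : X, G (x :: y) = some a →
        G (x :: (y ++ [z])) = G (List.replicate k a ++ [z])))

/-- `δ^{u_k}_{F_k} = φ_k` for every `k ≥ 2`. -/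
def SidedSectionsEq {X : Type*} (phi : ℕ → X → X → X) (side : ℕ → Bool)
    (F : List X → Option X) : Prop :=
  ∀ k : ℕ, 2 ≤ k → ∀ u v : X,
    (side k = true → F (List.replicate (k - 1) u ++ [v]) = some (phi k u v)) ∧
    (side k = false → F (u :: List.replicate (k - 1) v) = some (phi k u v))

section Conditions

variable {X : Type*} {phi1 : X → X} {phi : ℕ → X → X → X} {side : ℕ → Bool}
  {F G : List X → Option X}

theorem SidedSectionsEq.apply_add_two (hsec : SidedSectionsEq phi side F) (j : ℕ) (u v : X) :
    (side (j + 2) = true → F (List.replicate (j + 1) u ++ [v]) = some (phi (j + 2) u v)) ∧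
    (side (j + 2) = false → F (u :: List.replicate (j + 1) v) = some (phi (j + 2) u v)) :=
  hsec (j + 2) le_add_self u v

theorem SidedSectionsEq.replicate_eq (h1 : ∀ u, F [u] = some (phi1 u))
    (hsec : SidedSectionsEq phi side F) (j : ℕ) (u : X) :
    F (List.replicate (j + 1) u) = some (dphi phi1 phi (j + 1) u) := by
  cases j with
  | zero => exact h1 u
  | succ j =>
    cases hs : side (j + 2)
    · simpa [List.replicate_succ, dphi] using (hsec.apply_add_two j u u).2 hs
    · simpa [List.replicate_succ', dphi] using (hsec.apply_add_two j u u).1 hs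

theorem BAssoc.diagAbsorbing (hB : BAssoc F) (h1 : ∀ u, F [u] = some (phi1 u))
    (hsec : SidedSectionsEq phi side F) : DiagAbsorbing phi1 phi side := by
  intro k hk u v
  obtain ⟨j, rfl⟩ : ∃ j, k = j + 1 := ⟨k - 1, by omega⟩
  have hdiag := hsec.replicate_eq h1 j
  refine ⟨fun hs => ?_, fun hs => ?_⟩
  · have h := hB.append_singleton_eq (hdiag u) v
    rw [(hsec.apply_add_two j u v).1 hs, List.length_replicate,
      (hsec.apply_add_two j _ v).1 hs] at h
    exact Option.some.inj h
  · have h := hB.cons_eq (hdiag v) u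
    rw [(hsec.apply_add_two j u v).2 hs, List.length_replicate,
      (hsec.apply_add_two j u _).2 hs] at h
    exact Option.some.inj h

theorem BAssoc.recursiveAlong (hB : BAssoc F) (hsec : SidedSectionsEq phi side F) :
    RecursiveAlong phi side F := by
  intro k hk x z y hy
  have hsec' := hsec (k + 1) (by omega)
  simp only [Nat.add_sub_cancel] at hsec'
  have hcons (b : X) (h : F (y ++ [z]) = some b) :
      F (x :: (y ++ [z])) = F (x :: List.replicate k b) := by
    simpa [hy] using hB.cons_eq h x
  have hsnoc (a : X) (h : F (x :: y) = some a) :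
      F (x :: (y ++ [z])) = F (List.replicate k a ++ [z]) := by
    simpa [hy] using hB.append_singleton_eq h z
  exact ⟨fun hs => ⟨fun a h => (hsnoc a h).trans ((hsec' a z).1 hs), hcons⟩,
    fun hs => ⟨fun b h => (hcons b h).trans ((hsec' x b).2 hs), hsnoc⟩⟩

theorem RecursiveAlong.cons_congr (hE : EpsStd G) (hRec : RecursiveAlong phi side G)
    {s t : List X} (hlen : s.length = t.length) (hst : G s = G t) (a : X) :
    G (a :: s) = G (a :: t) := by
  rcases s.eq_nil_or_concat with rfl | ⟨y, z, rfl⟩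
  · rw [List.eq_nil_of_length_eq_zero hlen.symm]
  rcases t.eq_nil_or_concat with rfl | ⟨y', z', rfl⟩
  · simp at hlen
  simp only [List.concat_eq_append, List.length_append, List.length_singleton] at hlen hst ⊢
  obtain ⟨b, hb⟩ := hE.exists_eq_some (s := y ++ [z]) (by simp)
  have hs := hRec _ le_add_self a z y rfl
  have ht := hRec _ le_add_self a z' y' rfl
  rw [hlen] at hs
  cases hside : side (y'.length + 1 + 1)
  · rw [(hs.2 hside).1 b hb, (ht.2 hside).1 b (hst ▸ hb)]
  · rw [(hs.1 hside).2 b hb, (ht.1 hside).2 b (hst ▸ hb)]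

theorem RecursiveAlong.append_singleton_congr (hE : EpsStd G)
    (hRec : RecursiveAlong phi side G) {s t : List X} (hlen : s.length = t.length)
    (hst : G s = G t) (c : X) : G (s ++ [c]) = G (t ++ [c]) := by
  rcases s with _ | ⟨x, y⟩
  · rw [List.eq_nil_of_length_eq_zero hlen.symm]
  rcases t with _ | ⟨x', y'⟩
  · simp at hlen
  simp only [List.length_cons, Nat.add_right_cancel_iff] at hlen
  obtain ⟨a, ha⟩ := hE.exists_eq_some (s := x :: y) (by simp)
  have hs := hRec _ le_add_self x c y rfl
  have ht := hRec _ le_add_self x' c y' rfl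
  rw [hlen] at hs
  simp only [List.cons_append]
  cases hside : side (y'.length + 1 + 1)
  · rw [(hs.2 hside).2 a ha, (ht.2 hside).2 a (hst ▸ ha)]
  · rw [(hs.1 hside).1 a ha, (ht.1 hside).1 a (hst ▸ ha)]

theorem RecursiveAlong.bAssoc (hE : EpsStd G) (hR : AWRI G)
    (hRec : RecursiveAlong phi side G) : BAssoc G :=
  bAssoc_of_bPreassoc hE
    (bPreassoc_of_cons_of_append_singleton
      (fun a _ _ hlen hst => hRec.cons_congr hE hlen hst a)
      (fun _ _ c hlen hst => hRec.append_singleton_congr hE hlen hst c))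
    hR

theorem RecursiveAlong.sections_succ (hA : DiagAbsorbing phi1 phi side)
    (hRec : RecursiveAlong phi side G) {j : ℕ}
    (hdiag : ∀ u, G (List.replicate (j + 1) u) = some (dphi phi1 phi (j + 1) u)) (u v : X) :
    (side (j + 2) = true → G (List.replicate (j + 1) u ++ [v]) = some (phi (j + 2) u v)) ∧
    (side (j + 2) = false → G (u :: List.replicate (j + 1) v) = some (phi (j + 2) u v)) := by
  refine ⟨fun hs => ?_, fun hs => ?_⟩
  · have hrec := hRec (j + 1) le_add_self u v (List.replicate j u) (by simp)
    have h := (hrec.1 hs).1 _ (List.replicate_succ ▸ hdiag u)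
    rwa [← (hA (j + 1) le_add_self u v).1 hs, ← List.cons_append,
      ← List.replicate_succ] at h
  · have hrec := hRec (j + 1) le_add_self u v (List.replicate j v) (by simp)
    have h := (hrec.2 hs).1 _ (List.replicate_succ' ▸ hdiag v)
    rwa [← (hA (j + 1) le_add_self u v).2 hs, ← List.replicate_succ'] at h

theorem RecursiveAlong.replicate_eq (hA : DiagAbsorbing phi1 phi side)
    (h1 : ∀ u, G [u] = some (phi1 u)) (hRec : RecursiveAlong phi side G) (j : ℕ) (u : X) :
    G (List.replicate (j + 1) u) = some (dphi phi1 phi (j + 1) u) := by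
  induction j generalizing u with
  | zero => exact h1 u
  | succ j ih =>
    have hsec := hRec.sections_succ hA ih u u
    cases hs : side (j + 2)
    · simpa [List.replicate_succ, dphi] using hsec.2 hs
    · simpa [List.replicate_succ', dphi] using hsec.1 hs

theorem RecursiveAlong.sidedSectionsEq (hA : DiagAbsorbing phi1 phi side)
    (h1 : ∀ u, G [u] = some (phi1 u)) (hRec : RecursiveAlong phi side G) :
    SidedSectionsEq phi side G := by
  intro k hk u v
  obtain ⟨j, rfl⟩ : ∃ j, k = j + 2 := ⟨k - 2, by omega⟩
  exact hRec.sections_succ hA (hRec.replicate_eq hA h1 j) u v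

end Conditions

-- `side k = true` encodes `u_k = r` and `side k = false` encodes `u_k = ℓ`.
theorem stmt_7_general {X : Type*} (phi1 : X → X) (phi : ℕ → X → X → X)
    (side : ℕ → Bool) :
    ((∃ F : List X → Option X, BAssoc F ∧ EpsStd F ∧
        (∀ u : X, F [u] = some (phi1 u)) ∧
        (∀ k : ℕ, 2 ≤ k → ∀ u v : X,
          (side k = true → F (List.replicate (k - 1) u ++ [v]) = some (phi k u v)) ∧
          (side k = false → F (u :: List.replicate (k - 1) v) = some (phi k u v))))
      ↔
      ((∀ k : ℕ, 1 ≤ k → ∀ u v : X,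
          (side (k + 1) = true →
            phi (k + 1) u v = phi (k + 1) (dphi phi1 phi k u) v) ∧
          (side (k + 1) = false →
            phi (k + 1) u v = phi (k + 1) u (dphi phi1 phi k v))) ∧
       (∃ G : List X → Option X, EpsStd G ∧ AWRI G ∧
          (∀ u : X, G [u] = some (phi1 u)) ∧
          (∀ k : ℕ, 1 ≤ k → ∀ (x z : X) (y : List X), y.length + 1 = k →
            (side (k + 1) = true →
              (∀ a : X, G (x :: y) = some a →
                G (x :: (y ++ [z])) = some (phi (k + 1) a z)) ∧
              (∀ b : X, G (y ++ [z]) = some b →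
                G (x :: (y ++ [z])) = G (x :: List.replicate k b))) ∧
            (side (k + 1) = false →
              (∀ b : X, G (y ++ [z]) = some b →
                G (x :: (y ++ [z])) = some (phi (k + 1) x b)) ∧
              (∀ a : X, G (x :: y) = some a →
                G (x :: (y ++ [z])) = G (List.replicate k a ++ [z])))))))
    ∧
    -- If the conditions hold, then we can take F = G:
    (∀ G : List X → Option X,
      (∀ k : ℕ, 1 ≤ k → ∀ u v : X,
          (side (k + 1) = true →
            phi (k + 1) u v = phi (k + 1) (dphi phi1 phi k u) v) ∧
          (side (k + 1) = false →
            phi (k + 1) u v = phi (k + 1) u (dphi phi1 phi k v))) →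
      (EpsStd G ∧ AWRI G ∧
        (∀ u : X, G [u] = some (phi1 u)) ∧
        (∀ k : ℕ, 1 ≤ k → ∀ (x z : X) (y : List X), y.length + 1 = k →
          (side (k + 1) = true →
            (∀ a : X, G (x :: y) = some a →
              G (x :: (y ++ [z])) = some (phi (k + 1) a z)) ∧
            (∀ b : X, G (y ++ [z]) = some b →
              G (x :: (y ++ [z])) = G (x :: List.replicate k b))) ∧
          (side (k + 1) = false →
            (∀ b : X, G (y ++ [z]) = some b →
              G (x :: (y ++ [z])) = some (phi (k + 1) x b)) ∧
            (∀ a : X, G (x :: y) = some a →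
              G (x :: (y ++ [z])) = G (List.replicate k a ++ [z]))))) →
      (BAssoc G ∧ EpsStd G ∧
        (∀ u : X, G [u] = some (phi1 u)) ∧
        (∀ k : ℕ, 2 ≤ k → ∀ u v : X,
          (side k = true → G (List.replicate (k - 1) u ++ [v]) = some (phi k u v)) ∧
          (side k = false → G (u :: List.replicate (k - 1) v) = some (phi k u v))))) := by
  refine ⟨⟨fun ⟨F, hB, hE, h1, hsec⟩ => ?_, fun ⟨hA, G, hE, hR, h1, hRec⟩ => ?_⟩, ?_⟩
  · exact ⟨hB.diagAbsorbing h1 hsec, F, hE, hB.awri, h1, hB.recursiveAlong hsec⟩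
  · exact ⟨G, RecursiveAlong.bAssoc hE hR hRec, hE, h1,
      RecursiveAlong.sidedSectionsEq hA h1 hRec⟩
  · rintro G hA ⟨hE, hR, h1, hRec⟩
    exact ⟨RecursiveAlong.bAssoc hE hR hRec, hE, h1, RecursiveAlong.sidedSectionsEq hA h1 hRec⟩

/-- Existence of a B-associative ε-standard operation `F` with
`F₁ = φ₁` and `δ^{u_k}_{F_k} = φ_k` for all `k ≥ 2` is equivalent to
conditions (a) and (b); moreover, when they hold, `F = G` works.
Here `side k = true` encodes `u_k = r` and `side k = false` encodes `u_k = ℓ`. -/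
theorem stmt_7 {X : Type*} [Nonempty X] (phi1 : X → X) (phi : ℕ → X → X → X)
    (side : ℕ → Bool) :
    ((∃ F : List X → Option X, BAssoc F ∧ EpsStd F ∧
        (∀ u : X, F [u] = some (phi1 u)) ∧
        (∀ k : ℕ, 2 ≤ k → ∀ u v : X,
          (side k = true → F (List.replicate (k - 1) u ++ [v]) = some (phi k u v)) ∧
          (side k = false → F (u :: List.replicate (k - 1) v) = some (phi k u v))))
      ↔
      ((∀ k : ℕ, 1 ≤ k → ∀ u v : X,
          (side (k + 1) = true →
            phi (k + 1) u v = phi (k + 1) (dphi phi1 phi k u) v) ∧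
          (side (k + 1) = false →
            phi (k + 1) u v = phi (k + 1) u (dphi phi1 phi k v))) ∧
       (∃ G : List X → Option X, EpsStd G ∧ AWRI G ∧
          (∀ u : X, G [u] = some (phi1 u)) ∧
          (∀ k : ℕ, 1 ≤ k → ∀ (x z : X) (y : List X), y.length + 1 = k →
            (side (k + 1) = true →
              (∀ a : X, G (x :: y) = some a →
                G (x :: (y ++ [z])) = some (phi (k + 1) a z)) ∧
              (∀ b : X, G (y ++ [z]) = some b →
                G (x :: (y ++ [z])) = G (x :: List.replicate k b))) ∧
            (side (k + 1) = false →
              (∀ b : X, G (y ++ [z]) = some b →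
                G (x :: (y ++ [z])) = some (phi (k + 1) x b)) ∧
              (∀ a : X, G (x :: y) = some a →
                G (x :: (y ++ [z])) = G (List.replicate k a ++ [z])))))))
    ∧
    -- If the conditions hold, then we can take F = G:
    (∀ G : List X → Option X,
      (∀ k : ℕ, 1 ≤ k → ∀ u v : X,
          (side (k + 1) = true →
            phi (k + 1) u v = phi (k + 1) (dphi phi1 phi k u) v) ∧
          (side (k + 1) = false →
            phi (k + 1) u v = phi (k + 1) u (dphi phi1 phi k v))) →
      (EpsStd G ∧ AWRI G ∧
        (∀ u : X, G [u] = some (phi1 u)) ∧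
        (∀ k : ℕ, 1 ≤ k → ∀ (x z : X) (y : List X), y.length + 1 = k →
          (side (k + 1) = true →
            (∀ a : X, G (x :: y) = some a →
              G (x :: (y ++ [z])) = some (phi (k + 1) a z)) ∧
            (∀ b : X, G (y ++ [z]) = some b →
              G (x :: (y ++ [z])) = G (x :: List.replicate k b))) ∧
          (side (k + 1) = false →
            (∀ b : X, G (y ++ [z]) = some b →
              G (x :: (y ++ [z])) = some (phi (k + 1) x b)) ∧
            (∀ a : X, G (x :: y) = some a →
              G (x :: (y ++ [z])) = G (List.replicate k a ++ [z]))))) →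
      (BAssoc G ∧ EpsStd G ∧
        (∀ u : X, G [u] = some (phi1 u)) ∧
        (∀ k : ℕ, 2 ≤ k → ∀ u v : X,
          (side k = true → G (List.replicate (k - 1) u ++ [v]) = some (phi k u v)) ∧
          (side k = false → G (u :: List.replicate (k - 1) v) = some (phi k u v))))) :=
  stmt_7_general phi1 phi side
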